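/- arXiv:2605.19933 — 8 statements merged into one kernel-verified Lean document; each statement's English description precedes it below -/
import Mathlib

section
/- For all real x* > 0 and x > 2, with f(x*, x) = x*·(x/x* − ln(x/x*) − 1), one has f(x*, x−1) − f(x*, x) ≤ −(1 − x*/x − x*/(x(x−1))). -/
noncomputable def f (xs x : ℝ) : ℝ := xs * (x / xs - Real.log (x / xs) - 1)

lemma f_sub_f {xs x y : ℝ} (hxs : xs ≠ 0) (hx : x ≠ 0) (hy : y ≠ 0) :
    f xs y - f xs x = y - x + xs * Real.log (x / y) := by
  simp only [f, Real.log_div hx hy, Real.log_div hy hxs, Real.log_div hx hxs]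
  field_simp
  ring

lemma Real.log_div_le_sub_div {x y : ℝ} (hx : 0 < x) (hy : 0 < y) :
    Real.log (x / y) ≤ (x - y) / y := by
  calc Real.log (x / y) ≤ x / y - 1 := Real.log_le_sub_one_of_pos (by positivity)
    _ = (x - y) / y := by field_simp

theorem stmt_1 (xs x : ℝ) (hxs : 0 < xs) (hx : 2 < x) :
    f xs (x - 1) - f xs x ≤ -(1 - xs / x - xs / (x * (x - 1))) := by
  have hx0 : 0 < x := by linarith
  have hx1 : 0 < x - 1 := by linarith
  have hlog : Real.log (x / (x - 1)) ≤ 1 / (x - 1) := by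
    simpa using Real.log_div_le_sub_div hx0 hx1
  calc f xs (x - 1) - f xs x = -1 + xs * Real.log (x / (x - 1)) := by
        rw [f_sub_f hxs.ne' hx0.ne' hx1.ne']; ring
    _ ≤ -1 + xs * (1 / (x - 1)) := by gcongr
    _ = -(1 - xs / x - xs / (x * (x - 1))) := by field_simp; ring
end

section
/- The continuous mean-field IRIR system dI₁/dt = λ₁*I₁R₂ − ϱ₁I₁, dI₂/dt = λ₂*I₂R₁ − ϱ₂I₂, dR₁/dt = ϱ₁I₁ − λ₂*I₂R₁, dR₂/dt = ϱ₂I₂ − λ₁*I₁R₂, subject to I₁ + I₂ + R₁ + R₂ = n, has as its unique equilibrium with all four values positive (assuming ϱ₂/λ₂* + ϱ₁/λ₁* < n): R₁* = ϱ₂/λ₂*, R₂* = ϱ₁/λ₁*, I₁* = (n − R₁* − R₂*)·ϱ₂/(ϱ₁+ϱ₂), I₂* = (n − R₁* − R₂*)·ϱ₁/(ϱ₁+ϱ₂). -/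
/-- The mean-field IRIR system has, among states with all four coordinates positive,
exactly one equilibrium, given by the stated formulas. -/
theorem stmt_4 (lam1 lam2 rho1 rho2 n : ℝ)
    (hlam1 : 0 < lam1) (hlam2 : 0 < lam2) (hrho1 : 0 < rho1) (hrho2 : 0 < rho2)
    (hn : 0 < n) (hthr : rho2 / lam2 + rho1 / lam1 < n) :
    ∀ I1 R1 I2 R2 : ℝ, 0 < I1 → 0 < R1 → 0 < I2 → 0 < R2 →
      I1 + I2 + R1 + R2 = n →
      ((lam1 * I1 * R2 - rho1 * I1 = 0 ∧
        lam2 * I2 * R1 - rho2 * I2 = 0 ∧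
        rho1 * I1 - lam2 * I2 * R1 = 0 ∧
        rho2 * I2 - lam1 * I1 * R2 = 0) ↔
      (R1 = rho2 / lam2 ∧ R2 = rho1 / lam1 ∧
        I1 = (n - rho2 / lam2 - rho1 / lam1) * (rho2 / (rho1 + rho2)) ∧
        I2 = (n - rho2 / lam2 - rho1 / lam1) * (rho1 / (rho1 + rho2)))) := by
  intro I1 R1 I2 R2 hI1 hR1 hI2 hR2 hsum
  have hl1 := hlam1.ne'
  have hl2 := hlam2.ne'
  have hrr : rho1 + rho2 ≠ 0 := by positivity
  constructor
  · rintro ⟨e1, e2, e3, e4⟩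
    have hR2' : R2 = rho1 / lam1 := by
      have : I1 * (lam1 * R2 - rho1) = 0 := by ring_nf; linarith [e1]
      rcases mul_eq_zero.mp this with h | h
      · exact absurd h hI1.ne'
      · field_simp; linarith
    have hR1' : R1 = rho2 / lam2 := by
      have : I2 * (lam2 * R1 - rho2) = 0 := by ring_nf; linarith [e2]
      rcases mul_eq_zero.mp this with h | h
      · exact absurd h hI2.ne'
      · field_simp; linarith
    have h3 : rho1 * I1 = rho2 * I2 := by
      rw [hR1'] at e3
      have : lam2 * I2 * (rho2 / lam2) = rho2 * I2 := by field_simp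
      linarith [e3, this]
    subst hR1' hR2'
    have hS : I1 + I2 = n - rho2 / lam2 - rho1 / lam1 := by linarith
    refine ⟨rfl, rfl, ?_, ?_⟩
    · rw [← hS]; field_simp; ring_nf; linarith [h3]
    · rw [← hS]; field_simp; ring_nf; linarith [h3]
  · rintro ⟨hR1', hR2', hI1', hI2'⟩
    subst hR1' hR2' hI1' hI2'
    refine ⟨?_, ?_, ?_, ?_⟩ <;> field_simp <;> ring
end

section
/- Let F(I₁, R₁, I₂, R₂) = x₁f(I₁*, I₁) + y₁f(R₁*, R₁) + x₂f(I₂*, I₂) + y₂f(R₂*, R₂) with f(x*,x) = x*(x/x* − ln(x/x*) − 1), where (I₁*, R₁*, I₂*, R₂*) is the IRIR equilibrium and the parameters satisfy x₂ = ((ϱ₁+ϱ₂)/ϱ₂)·y₁ and x₁ = ((ϱ₁+ϱ₂)/ϱ₁)·y₂. Then the derivative of F along trajectories of the mean-field IRIR system equals −λ₂*(ϱ₁/ϱ₂)y₁·δ₁·(I₁·δ₁/R₁ + (δ₁+δ₂)) − λ₁*(ϱ₂/ϱ₁)y₂·δ₂·(I₂·δ₂/R₂ + (δ₁+δ₂)),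 where δ₁ = R₁ − R₁* and δ₂ = R₂ − R₂*. -/
/-- The Lyapunov function `F` with coefficients `x₁ y₁ x₂ y₂` and
equilibrium values `I1s R1s I2s R2s`. -/
noncomputable def F (x1 y1 x2 y2 I1s R1s I2s R2s I1 R1 I2 R2 : ℝ) : ℝ :=
  x1 * f I1s I1 + y1 * f R1s R1 + x2 * f I2s I2 + y2 * f R2s R2

lemma hasDerivAt_f {xs x : ℝ} (hxs : 0 < xs) (hx : 0 < x) :
    HasDerivAt (fun z => f xs z) (1 - xs / x) x := by
  have h1 : HasDerivAt (fun z : ℝ => z / xs) (1 / xs) x :=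
    (hasDerivAt_id x).div_const xs
  have h2 : HasDerivAt (fun z : ℝ => Real.log (z / xs)) (1 / xs / (x / xs)) x :=
    h1.log (by positivity)
  have h3 := ((h1.sub h2).sub_const 1).const_mul xs
  have : xs * (1 / xs - 1 / xs / (x / xs)) = 1 - xs / x := by
    field_simp
  rw [this] at h3
  exact h3

lemma deriv_const_mul_f {c xs x : ℝ} (k : ℝ) (hxs : 0 < xs) (hx : 0 < x) :
    deriv (fun z => c * f xs z + k) x = c * (1 - xs / x) := by
  exact (((hasDerivAt_f hxs hx).const_mul c).add_const k).deriv

theorem stmt_5 (lam1 lam2 rho1 rho2 n x1 y1 x2 y2 : ℝ)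
    (hlam1 : 0 < lam1) (hlam2 : 0 < lam2) (hrho1 : 0 < rho1) (hrho2 : 0 < rho2)
    (hn : 0 < n)
    (I1s R1s I2s R2s : ℝ)
    (hR1s : R1s = rho2 / lam2) (hR2s : R2s = rho1 / lam1)
    (hI1s : I1s = (n - R1s - R2s) * (rho2 / (rho1 + rho2)))
    (hI2s : I2s = (n - R1s - R2s) * (rho1 / (rho1 + rho2)))
    (hthr : R1s + R2s < n)
    (hx2 : x2 = ((rho1 + rho2) / rho2) * y1)
    (hx1 : x1 = ((rho1 + rho2) / rho1) * y2)
    (I1 R1 I2 R2 : ℝ)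
    (hI1 : 0 < I1) (hR1 : 0 < R1) (hI2 : 0 < I2) (hR2 : 0 < R2)
    (hsum : I1 + I2 + R1 + R2 = n) :
    deriv (fun z => F x1 y1 x2 y2 I1s R1s I2s R2s z R1 I2 R2) I1 *
        (lam1 * I1 * R2 - rho1 * I1) +
      deriv (fun z => F x1 y1 x2 y2 I1s R1s I2s R2s I1 z I2 R2) R1 *
        (rho1 * I1 - lam2 * I2 * R1) +
      deriv (fun z => F x1 y1 x2 y2 I1s R1s I2s R2s I1 R1 z R2) I2 *
        (lam2 * I2 * R1 - rho2 * I2) +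
      deriv (fun z => F x1 y1 x2 y2 I1s R1s I2s R2s I1 R1 I2 z) R2 *
        (rho2 * I2 - lam1 * I1 * R2) =
    -(lam2 * (rho1 / rho2) * y1 * (R1 - R1s) *
        (I1 * (R1 - R1s) / R1 + ((R1 - R1s) + (R2 - R2s)))) -
      lam1 * (rho2 / rho1) * y2 * (R2 - R2s) *
        (I2 * (R2 - R2s) / R2 + ((R1 - R1s) + (R2 - R2s))) := by
  have hthr' : 0 < n - R1s - R2s := by linarith
  have hI1s0 : 0 < I1s := by rw [hI1s]; positivity
  have hI2s0 : 0 < I2s := by rw [hI2s]; positivity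
  have hR1s0 : 0 < R1s := by rw [hR1s]; positivity
  have hR2s0 : 0 < R2s := by rw [hR2s]; positivity
  have d1 : HasDerivAt (fun z => F x1 y1 x2 y2 I1s R1s I2s R2s z R1 I2 R2)
      (x1 * (1 - I1s / I1)) I1 := by
    unfold F
    exact (((hasDerivAt_f hI1s0 hI1).const_mul x1).add_const _).add_const _
      |>.add_const _
  have d2 : HasDerivAt (fun z => F x1 y1 x2 y2 I1s R1s I2s R2s I1 z I2 R2)
      (y1 * (1 - R1s / R1)) R1 := by
    unfold F
    have := ((hasDerivAt_f hR1s0 hR1).const_mul y1)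
    exact ((this.const_add _).add_const _).add_const _
  have d3 : HasDerivAt (fun z => F x1 y1 x2 y2 I1s R1s I2s R2s I1 R1 z R2)
      (x2 * (1 - I2s / I2)) I2 := by
    unfold F
    have := ((hasDerivAt_f hI2s0 hI2).const_mul x2)
    exact (this.const_add _).add_const _
  have d4 : HasDerivAt (fun z => F x1 y1 x2 y2 I1s R1s I2s R2s I1 R1 I2 z)
      (y2 * (1 - R2s / R2)) R2 := by
    unfold F
    exact ((hasDerivAt_f hR2s0 hR2).const_mul y2).const_add _
  rw [d1.deriv, d2.deriv, d3.deriv, d4.deriv]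
  subst hI1s hI2s hx1 hx2 hR1s hR2s
  subst hsum
  field_simp
  ring
end

section
/- Fix k ≥ 3 and positive values λᵢ*, ϱᵢ, Rᵢ*, Iᵢ* with Σ_{j≠i} Rⱼ* = ϱᵢ/λᵢ* for all i. If for all i, (ϱᵢIᵢ*)/Rᵢ* + λᵢ*Iᵢ* = Σ_{j=1}^k λⱼ*Iⱼ*, then for all i, Iᵢ* = (Rᵢ*/λᵢ*)/(Σ_{j=1}^k Rⱼ*/λⱼ*) · (n − R*), where R* = Σ_{j=1}^k Rⱼ* and n = Σ_{j=1}^k (Iⱼ* + Rⱼ*). -/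
/-!
Since `∑_{j ≠ i} R_j = R - R_i`, the first hypothesis gives `ϱ_i = λ_i (R - R_i)`, and then the second
collapses to `λ_i I_i R / R_i = S` with `S = ∑ λ_j I_j`. Hence the vector `I` is proportional to
`R_i / λ_i`, and a proportional vector is its total times the normalised weights.
-/

open Finset

variable {K : Type*} [Field K]

theorem eq_div_mul_of_equilibrium {lam rho r R I S : K} (hlam : lam ≠ 0) (hr : r ≠ 0)
    (hR : R ≠ 0) (hrho : R - r = rho / lam) (hI : rho * I / r + lam * I = S) :
    I = S / R * (r / lam) := by
  have hrho' : rho = lam * (R - r) := by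
    rw [hrho]; field_simp
  rw [hrho'] at hI
  rw [← hI]
  field_simp
  ring

theorem eq_div_sum_mul_sum_of_eq_mul {ι : Type*} [Fintype ι] {x w : ι → K} {c : K}
    (hx : ∀ i, x i = c * w i) (hw : ∑ j, w j ≠ 0) (i : ι) :
    x i = (w i / ∑ j, w j) * ∑ j, x j := by
  simp only [hx, ← mul_sum]
  field_simp

theorem stmt_12_general (k : ℕ) (lam rho Rs Is : Fin k → ℝ)
    (hlam : ∀ i, 0 < lam i)
    (hRs : ∀ i, 0 < Rs i)
    (heqR : ∀ i, ∑ j ∈ univ.erase i, Rs j = rho i / lam i)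
    (heqI : ∀ i, rho i * Is i / Rs i + lam i * Is i = ∑ j, lam j * Is j) :
    ∀ i, Is i =
      ((Rs i / lam i) / ∑ j, Rs j / lam j) *
        ((∑ j, (Is j + Rs j)) - ∑ j, Rs j) := by
  intro i
  have hR : ∑ j, Rs j ≠ 0 := (sum_pos (fun j _ ↦ hRs j) ⟨i, mem_univ i⟩).ne'
  have hT : ∑ j, Rs j / lam j ≠ 0 :=
    (sum_pos (fun j _ ↦ div_pos (hRs j) (hlam j)) ⟨i, mem_univ i⟩).ne'
  have hprop (j : Fin k) : Is j = (∑ l, lam l * Is l) / (∑ l, Rs l) * (Rs j / lam j) := by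
    refine eq_div_mul_of_equilibrium (hlam j).ne' (hRs j).ne' hR ?_ (heqI j)
    rw [← heqR j, sum_erase_eq_sub (mem_univ j)]
  rw [sum_add_distrib, add_sub_cancel_right]
  exact eq_div_sum_mul_sum_of_eq_mul hprop hT i

theorem stmt_12 (k : ℕ) (hk : 3 ≤ k) (lam rho Rs Is : Fin k → ℝ)
    (hlam : ∀ i, 0 < lam i) (hrho : ∀ i, 0 < rho i)
    (hRs : ∀ i, 0 < Rs i) (hIs : ∀ i, 0 < Is i)
    (heqR : ∀ i, ∑ j ∈ univ.erase i, Rs j = rho i / lam i)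
    (heqI : ∀ i, rho i * Is i / Rs i + lam i * Is i = ∑ j, lam j * Is j) :
    ∀ i, Is i =
      ((Rs i / lam i) / ∑ j, Rs j / lam j) *
        ((∑ j, (Is j + Rs j)) - ∑ j, Rs j) :=
  stmt_12_general k lam rho Rs Is hlam hRs heqR heqI
end

section
/- Let (X_t)_{t∈ℕ} be a sequence of real random variables adapted to a filtration (F_t), and let T = inf{t : X_t ≤ 0}. Suppose there is δ > 0 such that for all t, E[(X_t − X_{t+1})·1{t<T} | F_t] ≥ δ·1{t<T}, and for all t, X_t·1{t≤T} ≥ 0. Then E[T] ≤ E[X₀]/δ. -/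
/-!
Write `A t = {t < T}`. Since `T` takes values in `ℕ ∪ {∞}`, `T = ∑ₜ 1_{A t}`, so
`E[T] = ∑ₜ P(A t)`. Taking expectations in the drift condition gives
`δ P(A t) ≤ E[(X t - X (t+1)) 1_{A t}]`, and summed over `t < N` the right-hand sides telescope
pointwise to `X 0 - X (min N T) ≤ X 0`, because the process is nonnegative up to time `T`.
Hence every partial sum of `∑ₜ P(A t)` is at most `E[X 0] / δ`.
-/

open MeasureTheory Set
open scoped ENNReal

theorem ENat.toENNReal_eq_tsum_ite (n : ℕ∞) :
    (n : ℝ≥0∞) = ∑' t : ℕ, if (t : ℕ∞) < n then 1 else 0 := by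
  induction n using ENat.recTopCoe with
  | top => simp
  | coe k =>
    rw [tsum_eq_sum (s := Finset.range k) (by simp)]
    simp [Finset.filter_true_of_mem fun t ht => Finset.mem_range.mp ht]

theorem sum_range_sub_mul_ite_le (x : ℕ → ℝ) (n : ℕ∞) (hx : ∀ t : ℕ, (t : ℕ∞) ≤ n → 0 ≤ x t)
    (N : ℕ) : ∑ t ∈ Finset.range N, (x t - x (t + 1)) * (if (t : ℕ∞) < n then 1 else 0) ≤ x 0 := by
  induction n using ENat.recTopCoe with
  | top =>
    simp only [ENat.natCast_lt_top, if_true, mul_one, Finset.sum_range_sub']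
    linarith [hx N le_top]
  | coe k =>
    have hstopped : ∑ t ∈ Finset.range N, (x t - x (t + 1)) * (if (t : ℕ∞) < k then 1 else 0)
        = ∑ t ∈ Finset.range (min N k), (x t - x (t + 1)) := by
      simp only [Nat.cast_lt, mul_ite, mul_one, mul_zero, ← Finset.sum_filter]
      congr 1; ext t; simp
    rw [hstopped, Finset.sum_range_sub']
    linarith [hx (min N k) (by exact_mod_cast min_le_right N k)]

theorem natCast_lt_iInf_natCast_iff {S : Set ℕ} {t : ℕ} :
    (t : ℕ∞) < ⨅ s ∈ S, (s : ℕ∞) ↔ ∀ s ∈ S, t < s :=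
  ⟨fun h s hs => by exact_mod_cast h.trans_le (iInf₂_le s hs),
    fun h => (ENat.natCast_lt_natCast.mpr t.lt_succ_self).trans_le
      (le_iInf₂ fun s hs => ENat.natCast_le_natCast.mpr (h s hs))⟩

section Drift

variable {Ω : Type*} {m m0 : MeasurableSpace Ω} {μ : Measure Ω}

theorem lintegral_toENNReal_eq_tsum_measure_lt {τ : Ω → ℕ∞}
    (hτ : ∀ t : ℕ, MeasurableSet {ω | (t : ℕ∞) < τ ω}) :
    ∫⁻ ω, (τ ω : ℝ≥0∞) ∂μ = ∑' t : ℕ, μ {ω | (t : ℕ∞) < τ ω} := by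
  simp_rw [ENat.toENNReal_eq_tsum_ite, ← lintegral_indicator_one (hτ _)]
  rw [← lintegral_tsum fun t => (measurable_one.indicator (hτ t)).aemeasurable]
  simp only [Set.indicator_apply, Set.mem_ofPred_eq, Pi.one_apply]

theorem mul_measureReal_le_setIntegral_of_ae_le_condExp [IsFiniteMeasure μ] (hm : m ≤ m0)
    {s : Set Ω} (hs : MeasurableSet s) {f : Ω → ℝ} (c : ℝ)
    (h : (fun ω => c * s.indicator (fun _ => (1 : ℝ)) ω)
      ≤ᵐ[μ] μ[fun ω => f ω * s.indicator (fun _ => (1 : ℝ)) ω | m]) :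
    c * μ.real s ≤ ∫ ω in s, f ω ∂μ := by
  have hmono := (integral_mono_ae
    (((integrable_const (1 : ℝ)).indicator hs).const_mul c) integrable_condExp h).trans_eq
    (integral_condExp hm)
  simpa [integral_const_mul, ← indicator_mul_right, integral_indicator hs,
    integral_indicator_one hs] using hmono

theorem lintegral_le_of_additive_drift [IsFiniteMeasure μ] {τ : Ω → ℕ∞}
    (hτ : ∀ t : ℕ, MeasurableSet {ω | (t : ℕ∞) < τ ω}) {X : ℕ → Ω → ℝ}
    (hint : ∀ t, Integrable (X t) μ) {δ : ℝ} (hδ : 0 < δ)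
    (hdrift : ∀ t : ℕ, δ * μ.real {ω | (t : ℕ∞) < τ ω}
      ≤ ∫ ω in {ω | (t : ℕ∞) < τ ω}, (X t ω - X (t + 1) ω) ∂μ)
    (hnonneg : ∀ t : ℕ, ∀ ω, (t : ℕ∞) ≤ τ ω → 0 ≤ X t ω) :
    ∫⁻ ω, (τ ω : ℝ≥0∞) ∂μ ≤ ENNReal.ofReal ((∫ ω, X 0 ω ∂μ) / δ) := by
  rw [lintegral_toENNReal_eq_tsum_measure_lt hτ, ENNReal.tsum_eq_iSup_nat]
  refine iSup_le fun N => ?_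
  have hint_step : ∀ t : ℕ, Integrable
      ({ω | (t : ℕ∞) < τ ω}.indicator fun ω => X t ω - X (t + 1) ω) μ :=
    fun t => ((hint t).sub (hint (t + 1))).indicator (hτ t)
  have hsum : δ * ∑ t ∈ Finset.range N, μ.real {ω | (t : ℕ∞) < τ ω} ≤ ∫ ω, X 0 ω ∂μ :=
    calc δ * ∑ t ∈ Finset.range N, μ.real {ω | (t : ℕ∞) < τ ω}
      _ ≤ ∑ t ∈ Finset.range N, ∫ ω in {ω | (t : ℕ∞) < τ ω}, (X t ω - X (t + 1) ω) ∂μ := by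
        rw [Finset.mul_sum]; exact Finset.sum_le_sum fun t _ => hdrift t
      _ = ∫ ω, ∑ t ∈ Finset.range N,
            {ω | (t : ℕ∞) < τ ω}.indicator (fun ω => X t ω - X (t + 1) ω) ω ∂μ := by
        rw [integral_finsetSum _ fun t _ => hint_step t]
        simp only [integral_indicator (hτ _)]
      _ ≤ ∫ ω, X 0 ω ∂μ := by
        refine integral_mono (integrable_finsetSum _ fun t _ => hint_step t) (hint 0) fun ω => ?_
        simpa [indicator_apply, mul_ite] using
          sum_range_sub_mul_ite_le (X · ω) (τ ω) (hnonneg · ω) N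
  calc ∑ t ∈ Finset.range N, μ {ω | (t : ℕ∞) < τ ω}
      = ENNReal.ofReal (∑ t ∈ Finset.range N, μ.real {ω | (t : ℕ∞) < τ ω}) := by
        rw [ENNReal.ofReal_sum_of_nonneg fun t _ => measureReal_nonneg]
        exact (Finset.sum_congr rfl fun t _ => ofReal_measureReal).symm
    _ ≤ ENNReal.ofReal ((∫ ω, X 0 ω ∂μ) / δ) :=
        ENNReal.ofReal_le_ofReal ((le_div_iff₀ hδ).mpr (by linarith))

theorem measurableSet_natCast_lt_hittingTime {X : ℕ → Ω → ℝ} (hX : ∀ s, Measurable (X s))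
    (t : ℕ) : MeasurableSet {ω | (t : ℕ∞) < ⨅ s ∈ {s | X s ω ≤ 0}, (s : ℕ∞)} := by
  have hset : {ω | (t : ℕ∞) < ⨅ s ∈ {s | X s ω ≤ 0}, (s : ℕ∞)} = ⋂ s ≤ t, {ω | 0 < X s ω} := by
    ext ω
    simp only [mem_ofPred_eq, mem_iInter]
    exact natCast_lt_iInf_natCast_iff.trans
      ⟨fun h s hst => not_le.mp fun hs => (h s hs).not_ge hst,
        fun h s hs => not_le.mp fun hst => (h s hst).not_ge hs⟩
  rw [hset]
  exact MeasurableSet.iInter fun s => .iInter fun _ => measurableSet_lt measurable_const (hX s)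

end Drift

/-- Additive drift theorem: if the process drops by at least `δ` in expectation while
running and stays nonnegative up to the hitting time `T` of `(-∞, 0]`, then
`E[T] ≤ E[X₀]/δ`. -/
theorem stmt_13 {Ω : Type*} {m0 : MeasurableSpace Ω} (μ : Measure Ω)
    [IsProbabilityMeasure μ] (ℱ : Filtration ℕ m0) (X : ℕ → Ω → ℝ)
    (hadapted : Adapted ℱ X) (hint : ∀ t, Integrable (X t) μ)
    (T : Ω → ℝ≥0∞) (hT : ∀ ω, T ω = ⨅ t ∈ {t : ℕ | X t ω ≤ 0}, (t : ℝ≥0∞))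
    (δ : ℝ) (hδ : 0 < δ)
    (hdrift : ∀ t : ℕ,
      (fun ω => δ * indicator {ω | (t : ℝ≥0∞) < T ω} (fun _ => (1 : ℝ)) ω)
        ≤ᵐ[μ] μ[fun ω =>
          (X t ω - X (t + 1) ω) * indicator {ω | (t : ℝ≥0∞) < T ω} (fun _ => (1 : ℝ)) ω
          | ℱ t])
    (hnonneg : ∀ t : ℕ, ∀ ω, (t : ℝ≥0∞) ≤ T ω → 0 ≤ X t ω) :
    ∫⁻ ω, T ω ∂μ ≤ ENNReal.ofReal ((∫ ω, X 0 ω ∂μ) / δ) := by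
  set τ : Ω → ℕ∞ := fun ω => ⨅ s ∈ {s | X s ω ≤ 0}, (s : ℕ∞)
  obtain rfl : T = fun ω => (τ ω : ℝ≥0∞) := funext fun ω => by simp [τ, hT]
  have hτ := measurableSet_natCast_lt_hittingTime fun s => (hadapted s).mono (ℱ.le s) le_rfl
  have hlt (t : ℕ) (n : ℕ∞) : (t : ℝ≥0∞) < n ↔ (t : ℕ∞) < n := by
    rw [← ENat.toENNReal_coe, ENat.toENNReal_lt]
  have hle (t : ℕ) (n : ℕ∞) : (t : ℝ≥0∞) ≤ n ↔ (t : ℕ∞) ≤ n := by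
    rw [← ENat.toENNReal_coe, ENat.toENNReal_le]
  simp only [hlt, hle] at hdrift hnonneg
  refine lintegral_le_of_additive_drift hτ hint hδ (fun t => ?_) hnonneg
  exact mul_measureReal_le_setIntegral_of_ae_le_condExp (ℱ.le t) (hτ t) δ (hdrift t)
end

section
/- Let (X_t)_{t∈ℕ} be an integrable real-valued process adapted to a filtration (F_t), X₀ ≤ 0, b > 0, and T = inf{t : X_t ≥ b}. Suppose there exist a ≤ 0, c ∈ (0, b), ε < 0 such that for all t: (1) E[X_{t+1} − X_t | F_t]·1{X_t ≥ a ∧ t < T} ≤ ε·1{X_t ≥ a ∧ t < T}; (2) |X_t − X_{t+1}|·1{X_t ≥ a} < c·1{X_t ≥ a ∧ t < T} + 1{X_t < a ∨ t ≥ T}; (3) X_{t+1}·1{X_t < a ∧ t < T} ≤ 0. Then for all t ∈ ℕ, Pr[T ≤ t] ≤ t²·exp(−b|ε|/(2c²)). -/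
open MeasureTheory ProbabilityTheory Set
open scoped ENNReal

/-!
Put `L = |ε| / c²` and assume first `|ε| ≤ c`, so that `L c ≤ 1`. While the process is in the
region `{a ≤ X t, t < T}`, its steps are smaller than `c`, so `e^x ≤ 1 + x + x²` (for `|x| ≤ 1`)
and the drift bound give `E[exp (L ΔX) | ℱ t] ≤ 1 + L ε + L² c² = 1`: there `exp (L X)` is a
supermartingale. Since the process cannot jump from below `a` to above `0`, a path that reaches
`[b, ∞)` by time `t` does so at the end of an excursion which starts at some time `s` at height
`≤ 0` and stays in the region until a time `r` with `s ≤ r < t`. By the exponential Markov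
inequality each of these at most `t²` excursions reaches `b` with probability at most
`exp (-L b)`. If `|ε| > c`, the drift bound cannot be met by steps smaller than `c`, so the
region is null.
-/

theorem integral_mul_le_of_condExp_le {Ω : Type*} {m m0 : MeasurableSpace Ω} {μ : Measure Ω}
    (hm : m ≤ m0) [SigmaFinite (μ.trim hm)] {W Z Y : Ω → ℝ} {C : ℝ}
    (hW : StronglyMeasurable[m] W) (hW0 : 0 ≤ W) (hWC : ∀ ω, ‖W ω‖ ≤ C)
    (hZ : Integrable Z μ) (hY : Integrable Y μ) (hZY : μ[Z|m] ≤ᵐ[μ] Y) :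
    ∫ ω, W ω * Z ω ∂μ ≤ ∫ ω, W ω * Y ω ∂μ := by
  have hWm : AEStronglyMeasurable W μ := (hW.mono hm).aestronglyMeasurable
  calc ∫ ω, W ω * Z ω ∂μ = ∫ ω, W ω * μ[Z|m] ω ∂μ := by
        rw [← integral_condExp hm]
        exact integral_congr_ae (condExp_mul_of_stronglyMeasurable_left hW
          (hZ.bdd_mul hWm (.of_forall hWC)) hZ)
    _ ≤ ∫ ω, W ω * Y ω ∂μ :=
        integral_mono_ae (integrable_condExp.bdd_mul hWm (.of_forall hWC))
          (hY.bdd_mul hWm (.of_forall hWC)) (hZY.mono fun ω h => mul_le_mul_of_nonneg_left h (hW0 ω))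

theorem integral_mul_exp_le_of_integral_mul_le {Ω : Type*} {m0 : MeasurableSpace Ω}
    {μ : Measure Ω} {W D : Ω → ℝ} {c ε L : ℝ} (hW : Integrable W μ) (hW0 : 0 ≤ W)
    (hD : AEStronglyMeasurable D μ) (hDc : ∀ ω, |D ω| ≤ c)
    (hL : 0 ≤ L) (hLc : L * c ≤ 1) (hLε : L * c ^ 2 ≤ -ε)
    (hdrift : ∫ ω, W ω * D ω ∂μ ≤ ε * ∫ ω, W ω ∂μ) :
    ∫ ω, W ω * Real.exp (L * D ω) ∂μ ≤ ∫ ω, W ω ∂μ := by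
  have hLD : ∀ ω, |L * D ω| ≤ L * c := fun ω => by
    rw [abs_mul, abs_of_nonneg hL]
    exact mul_le_mul_of_nonneg_left (hDc ω) hL
  have hexp_le : ∀ ω, Real.exp (L * D ω) ≤ 1 + L * D ω + L ^ 2 * c ^ 2 := fun ω => by
    have hquad := (abs_le.mp (Real.abs_exp_sub_one_sub_id_le ((hLD ω).trans hLc))).2
    have hsq : (L * D ω) ^ 2 ≤ (L * c) ^ 2 := by
      rw [← sq_abs]
      exact pow_le_pow_left₀ (abs_nonneg _) (hLD ω) 2
    linarith
  have hWD : Integrable (fun ω => W ω * D ω) μ :=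
    hW.mul_bdd hD (.of_forall hDc)
  have hWexp : Integrable (fun ω => W ω * Real.exp (L * D ω)) μ :=
    hW.mul_bdd (Real.continuous_exp.comp_aestronglyMeasurable (hD.const_mul L))
      (.of_forall fun ω => by
        rw [Real.norm_eq_abs, abs_of_pos (Real.exp_pos _), Real.exp_le_exp]
        exact (le_abs_self _).trans (hLD ω))
  calc ∫ ω, W ω * Real.exp (L * D ω) ∂μ
      ≤ ∫ ω, ((1 + L ^ 2 * c ^ 2) * W ω + L * (W ω * D ω)) ∂μ :=
        integral_mono hWexp ((hW.const_mul _).add (hWD.const_mul L)) fun ω => by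
          nlinarith [mul_le_mul_of_nonneg_left (hexp_le ω) (hW0 ω)]
    _ = (1 + L ^ 2 * c ^ 2) * ∫ ω, W ω ∂μ + L * ∫ ω, W ω * D ω ∂μ := by
        rw [integral_add (hW.const_mul _) (hWD.const_mul L), integral_const_mul,
          integral_const_mul]
    _ ≤ ∫ ω, W ω ∂μ := by
        have hI := integral_nonneg (μ := μ) hW0
        nlinarith [mul_le_mul_of_nonneg_left hdrift hL, mul_nonneg (mul_nonneg hL hI)
          (sub_nonneg.mpr hLε)]

theorem integrableOn_exp_mul_of_le {Ω : Type*} {m0 : MeasurableSpace Ω} {μ : Measure Ω}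
    [IsFiniteMeasure μ] {f : Ω → ℝ} {s : Set Ω} {L K : ℝ} (hf : AEStronglyMeasurable f μ)
    (hs : MeasurableSet s) (hL : 0 ≤ L) (hfK : ∀ ω ∈ s, f ω ≤ K) :
    IntegrableOn (fun ω => Real.exp (L * f ω)) s μ :=
  Measure.integrableOn_of_bounded (measure_ne_top μ s)
    (Real.continuous_exp.comp_aestronglyMeasurable (hf.const_mul L)) (M := Real.exp (L * K))
    ((ae_restrict_mem hs).mono fun ω hω => by
      rw [Real.norm_eq_abs, abs_of_pos (Real.exp_pos _), Real.exp_le_exp]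
      exact mul_le_mul_of_nonneg_left (hfK ω hω) hL)

section DriftRegion

variable {Ω : Type*} {m0 : MeasurableSpace Ω} {μ : Measure Ω} {ℱ : Filtration ℕ m0}
  {X : ℕ → Ω → ℝ} {A : ℕ → Set Ω} {B c ε L : ℝ} {s r : ℕ}

structure DriftRegion (μ : Measure Ω) (ℱ : Filtration ℕ m0) (X : ℕ → Ω → ℝ) (A : ℕ → Set Ω)
    (B c ε : ℝ) : Prop where
  adapted : Adapted ℱ X
  integrable : ∀ u, Integrable (X u) μ
  measurableSet : ∀ u, MeasurableSet[ℱ u] (A u)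
  le_of_mem : ∀ u, ∀ ω ∈ A u, X u ω ≤ B
  abs_sub_le : ∀ u, ∀ ω ∈ A u, |X u ω - X (u + 1) ω| ≤ c
  condExp_le : ∀ u, μ[fun ω => (X (u + 1) ω - X u ω) * (A u).indicator (fun _ => (1 : ℝ)) ω | ℱ u]
    ≤ᵐ[μ] fun ω => ε * (A u).indicator (fun _ => (1 : ℝ)) ω

def excursion (X : ℕ → Ω → ℝ) (A : ℕ → Set Ω) (s r : ℕ) : Set Ω :=
  {ω | X s ω ≤ 0} ∩ ⋂ v ∈ Icc s r, A v

theorem excursion_subset (hsr : s ≤ r) : excursion X A s r ⊆ A r :=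
  fun _ hω => mem_iInter₂.mp hω.2 r ⟨hsr, le_rfl⟩

theorem excursion_succ_subset : excursion X A s (r + 1) ⊆ excursion X A s r :=
  fun _ hω => ⟨hω.1, biInter_mono (Icc_subset_Icc_right r.le_succ) (fun _ _ => subset_rfl) hω.2⟩

namespace DriftRegion

theorem measurable (h : DriftRegion μ ℱ X A B c ε) (u : ℕ) : Measurable (X u) :=
  (h.adapted u).mono (ℱ.le u) le_rfl

theorem measurableSet_excursion (h : DriftRegion μ ℱ X A B c ε) (hsr : s ≤ r) :
    MeasurableSet[ℱ r] (excursion X A s r) :=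
  (measurableSet_le ((h.adapted s).mono (ℱ.mono hsr) le_rfl) measurable_const).inter
    (.biInter (to_countable _) fun v hv => ℱ.mono hv.2 _ (h.measurableSet v))

theorem integrable_increment (h : DriftRegion μ ℱ X A B c ε) (u : ℕ) :
    Integrable (fun ω => (X (u + 1) ω - X u ω) * (A u).indicator (fun _ => (1 : ℝ)) ω) μ :=
  ((h.integrable (u + 1)).sub (h.integrable u)).mul_bdd
    (measurable_const.indicator (ℱ.le u _ (h.measurableSet u))).aestronglyMeasurable (c := 1)
    (.of_forall fun ω => by
      by_cases hω : ω ∈ A u <;> simp [hω])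

theorem integrableOn_exp_succ [IsFiniteMeasure μ] (h : DriftRegion μ ℱ X A B c ε) (hL : 0 ≤ L)
    {G : Set Ω} (hG : MeasurableSet G) (hGA : G ⊆ A r) :
    IntegrableOn (fun ω => Real.exp (L * X (r + 1) ω)) G μ :=
  integrableOn_exp_mul_of_le (h.integrable (r + 1)).aestronglyMeasurable hG hL (K := B + c)
    fun ω hω => by
      have := h.le_of_mem r ω (hGA hω)
      linarith [(abs_le.mp (h.abs_sub_le r ω (hGA hω))).1]

theorem integral_mul_increment_le [IsFiniteMeasure μ] (h : DriftRegion μ ℱ X A B c ε)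
    {W : Ω → ℝ} {C : ℝ} (hW : StronglyMeasurable[ℱ r] W) (hW0 : 0 ≤ W) (hWC : ∀ ω, ‖W ω‖ ≤ C)
    (hWA : ∀ ω ∉ A r, W ω = 0) :
    ∫ ω, W ω * ((X (r + 1) ω - X r ω) * (A r).indicator (fun _ => (1 : ℝ)) ω) ∂μ ≤
      ε * ∫ ω, W ω ∂μ := by
  have hA := ℱ.le r _ (h.measurableSet r)
  calc _ ≤ ∫ ω, W ω * (ε * (A r).indicator (fun _ => (1 : ℝ)) ω) ∂μ :=
        integral_mul_le_of_condExp_le (ℱ.le r) hW hW0 hWC (h.integrable_increment r)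
          (((integrable_const 1).indicator hA).const_mul ε) (h.condExp_le r)
    _ = ε * ∫ ω, W ω ∂μ := by
        rw [← integral_const_mul]
        congr 1 with ω
        by_cases hω : ω ∈ A r
        · simp [hω, mul_comm]
        · simp [hω, hWA ω hω]

theorem setIntegral_exp_succ_le [IsFiniteMeasure μ] (h : DriftRegion μ ℱ X A B c ε) (hc : 0 ≤ c)
    (hL : 0 ≤ L) (hLc : L * c ≤ 1) (hLε : L * c ^ 2 ≤ -ε) {G : Set Ω}
    (hG : MeasurableSet[ℱ r] G) (hGA : G ⊆ A r) :
    ∫ ω in G, Real.exp (L * X (r + 1) ω) ∂μ ≤ ∫ ω in G, Real.exp (L * X r ω) ∂μ := by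
  have hGm : MeasurableSet G := ℱ.le r _ hG
  set W := G.indicator fun ω => Real.exp (L * X r ω) with hW_def
  set Z := fun ω => (X (r + 1) ω - X r ω) * (A r).indicator (fun _ => (1 : ℝ)) ω with hZ_def
  have hW : StronglyMeasurable[ℱ r] W :=
    (((h.adapted r).const_mul L).exp.stronglyMeasurable).indicator hG
  have hW0 : 0 ≤ W := indicator_nonneg fun _ _ => (Real.exp_pos _).le
  have hWB : ∀ ω, ‖W ω‖ ≤ Real.exp (L * B) := fun ω => by
    by_cases hω : ω ∈ G
    · rw [hW_def, indicator_of_mem hω, Real.norm_eq_abs, abs_of_pos (Real.exp_pos _),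
        Real.exp_le_exp]
      exact mul_le_mul_of_nonneg_left (h.le_of_mem r ω (hGA hω)) hL
    · simp [hW_def, hω, (Real.exp_pos _).le]
  have hWint : Integrable W μ :=
    (integrableOn_exp_mul_of_le (h.integrable r).aestronglyMeasurable hGm hL
      fun ω hω => h.le_of_mem r ω (hGA hω)).integrable_indicator hGm
  have hZc : ∀ ω, |Z ω| ≤ c := fun ω => by
    by_cases hω : ω ∈ A r
    · simpa [hZ_def, hω, abs_sub_comm] using h.abs_sub_le r ω hω
    · simpa [hZ_def, hω] using hc
  have hdrift : ∫ ω, W ω * Z ω ∂μ ≤ ε * ∫ ω, W ω ∂μ :=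
    h.integral_mul_increment_le hW hW0 hWB fun ω hω => indicator_of_notMem (mt (@hGA ω) hω) _
  calc ∫ ω in G, Real.exp (L * X (r + 1) ω) ∂μ = ∫ ω, W ω * Real.exp (L * Z ω) ∂μ := by
        rw [← integral_indicator hGm]
        congr 1 with ω
        by_cases hω : ω ∈ G
        · simp only [hW_def, hZ_def, indicator_of_mem hω, indicator_of_mem (hGA hω), mul_one,
            ← Real.exp_add]
          ring_nf
        · simp [hW_def, hω]
    _ ≤ ∫ ω, W ω ∂μ :=
        integral_mul_exp_le_of_integral_mul_le hWint hW0
          (h.integrable_increment r).aestronglyMeasurable hZc hL hLc hLε hdrift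
    _ = ∫ ω in G, Real.exp (L * X r ω) ∂μ := integral_indicator hGm

theorem setIntegral_exp_excursion_le_one [IsProbabilityMeasure μ]
    (h : DriftRegion μ ℱ X A B c ε) (hc : 0 ≤ c) (hL : 0 ≤ L) (hLc : L * c ≤ 1)
    (hLε : L * c ^ 2 ≤ -ε) (hsr : s ≤ r) :
    ∫ ω in excursion X A s r, Real.exp (L * X r ω) ∂μ ≤ 1 := by
  induction r, hsr using Nat.le_induction with
  | base =>
    have hle := norm_setIntegral_le_of_norm_le_const (μ := μ) (measure_lt_top μ _) (C := 1)
      (f := fun ω => Real.exp (L * X s ω)) fun ω (hω : ω ∈ excursion X A s s) => by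
        rw [Real.norm_eq_abs, abs_of_pos (Real.exp_pos _), Real.exp_le_one_iff]
        exact mul_nonpos_of_nonneg_of_nonpos hL hω.1
    exact (le_abs_self _).trans (hle.trans (by rw [one_mul]; exact measureReal_le_one))
  | succ r hsr ih =>
    have hG := ℱ.le r _ (h.measurableSet_excursion hsr)
    calc ∫ ω in excursion X A s (r + 1), Real.exp (L * X (r + 1) ω) ∂μ
        ≤ ∫ ω in excursion X A s r, Real.exp (L * X (r + 1) ω) ∂μ :=
          setIntegral_mono_set (h.integrableOn_exp_succ hL hG (excursion_subset hsr))
            (.of_forall fun _ => (Real.exp_pos _).le) excursion_succ_subset.eventuallyLE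
      _ ≤ ∫ ω in excursion X A s r, Real.exp (L * X r ω) ∂μ :=
          h.setIntegral_exp_succ_le hc hL hLc hLε (h.measurableSet_excursion hsr)
            (excursion_subset hsr)
      _ ≤ 1 := ih

theorem measureReal_excursion_inter_le [IsProbabilityMeasure μ] (h : DriftRegion μ ℱ X A B c ε)
    (hc : 0 ≤ c) (hL : 0 ≤ L) (hLc : L * c ≤ 1) (hLε : L * c ^ 2 ≤ -ε) (b : ℝ) (hsr : s ≤ r) :
    μ.real (excursion X A s r ∩ {ω | b ≤ X (r + 1) ω}) ≤ Real.exp (-(L * b)) := by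
  have hG := ℱ.le r _ (h.measurableSet_excursion hsr)
  have hmgf : mgf (X (r + 1)) (μ.restrict (excursion X A s r)) L ≤ 1 :=
    (h.setIntegral_exp_succ_le hc hL hLc hLε (h.measurableSet_excursion hsr)
      (excursion_subset hsr)).trans (h.setIntegral_exp_excursion_le_one hc hL hLc hLε hsr)
  calc μ.real (excursion X A s r ∩ {ω | b ≤ X (r + 1) ω})
      = (μ.restrict (excursion X A s r)).real {ω | b ≤ X (r + 1) ω} := by
        rw [measureReal_restrict_apply (measurableSet_le measurable_const
          (h.measurable (r + 1))), inter_comm]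
    _ ≤ Real.exp (-L * b) * mgf (X (r + 1)) (μ.restrict (excursion X A s r)) L :=
        measure_ge_le_exp_mul_mgf b hL (h.integrableOn_exp_succ hL hG (excursion_subset hsr))
    _ ≤ Real.exp (-(L * b)) := by
        rw [neg_mul]
        exact mul_le_of_le_one_right (Real.exp_pos _).le hmgf

theorem measure_eq_zero_of_lt [IsFiniteMeasure μ] (h : DriftRegion μ ℱ X A B c ε)
    (hcε : c < -ε) (u : ℕ) : μ (A u) = 0 := by
  have hA := ℱ.le u _ (h.measurableSet u)
  have hind : Integrable ((A u).indicator fun _ => (1 : ℝ)) μ :=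
    (integrable_const 1).indicator hA
  have hupper : ∫ ω, (X (u + 1) ω - X u ω) * (A u).indicator (fun _ => (1 : ℝ)) ω ∂μ
      ≤ ε * μ.real (A u) := by
    rw [← integral_condExp (ℱ.le u)]
    calc _ ≤ ∫ ω, ε * (A u).indicator (fun _ => (1 : ℝ)) ω ∂μ :=
          integral_mono_ae integrable_condExp (hind.const_mul ε) (h.condExp_le u)
      _ = ε * μ.real (A u) := by rw [integral_const_mul, integral_indicator_const _ hA]; simp
  have hlower : -c * μ.real (A u)
      ≤ ∫ ω, (X (u + 1) ω - X u ω) * (A u).indicator (fun _ => (1 : ℝ)) ω ∂μ := by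
    calc -c * μ.real (A u) = ∫ ω, -c * (A u).indicator (fun _ => (1 : ℝ)) ω ∂μ := by
          rw [integral_const_mul, integral_indicator_const _ hA]; simp
      _ ≤ _ := integral_mono (hind.const_mul _) (h.integrable_increment u) fun ω => by
          by_cases hω : ω ∈ A u
          · simp only [hω, indicator_of_mem, mul_one]
            linarith [(abs_le.mp (h.abs_sub_le u ω hω)).2]
          · simp [hω]
  have hzero : μ.real (A u) = 0 := by nlinarith [measureReal_nonneg (μ := μ) (s := A u)]
  exact (measureReal_eq_zero_iff).1 hzero

theorem measureReal_excursion_inter_le_exp [IsProbabilityMeasure μ]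
    (h : DriftRegion μ ℱ X A B c ε) (hc : 0 < c) (hε : ε < 0) {b : ℝ} (hb : 0 ≤ b)
    (hsr : s ≤ r) :
    μ.real (excursion X A s r ∩ {ω | b ≤ X (r + 1) ω}) ≤
      Real.exp (-(b * |ε|) / (2 * c ^ 2)) := by
  rcases le_or_gt (-ε) c with hεc | hεc
  · have hc2 : 0 < c ^ 2 := by positivity
    have hε' : 0 ≤ -ε := neg_nonneg.mpr hε.le
    refine (h.measureReal_excursion_inter_le hc.le (L := -ε / c ^ 2) (div_nonneg hε' hc2.le)
      ?_ (by field_simp; rfl) b hsr).trans (Real.exp_le_exp.mpr ?_)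
    · rw [div_mul_eq_mul_div, div_le_one hc2]
      nlinarith
    · rw [abs_of_neg hε, div_mul_eq_mul_div, mul_comm (-ε), neg_div, neg_le_neg_iff]
      exact div_le_div_of_nonneg_left (mul_nonneg hb hε') hc2 (by linarith)
  · calc μ.real (excursion X A s r ∩ {ω | b ≤ X (r + 1) ω}) ≤ μ.real (A r) :=
          measureReal_mono (inter_subset_left.trans (excursion_subset hsr))
      _ = 0 := by rw [measureReal_def, h.measure_eq_zero_of_lt hεc r, ENNReal.toReal_zero]
      _ ≤ _ := (Real.exp_pos _).le

end DriftRegion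

end DriftRegion

theorem measureReal_le_sq_mul_of_subset_iUnion {Ω : Type*} {m0 : MeasurableSpace Ω}
    {μ : Measure Ω} [IsFiniteMeasure μ] {S : Set Ω} {E : ℕ → ℕ → Set Ω} {t : ℕ} {p : ℝ}
    (hS : S ⊆ ⋃ r ∈ Finset.range t, ⋃ s ∈ Finset.range (r + 1), E s r)
    (hE : ∀ s r, s ≤ r → μ.real (E s r) ≤ p) :
    μ.real S ≤ t ^ 2 * p := by
  have hp : 0 ≤ p := measureReal_nonneg.trans (hE 0 0 le_rfl)
  calc μ.real S ≤ ∑ r ∈ Finset.range t, μ.real (⋃ s ∈ Finset.range (r + 1), E s r) :=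
        (measureReal_mono hS (measure_ne_top μ _)).trans (measureReal_biUnion_finset_le _ _)
    _ ≤ ∑ r ∈ Finset.range t, ∑ s ∈ Finset.range (r + 1), μ.real (E s r) :=
        Finset.sum_le_sum fun r _ => measureReal_biUnion_finset_le _ _
    _ ≤ ∑ r ∈ Finset.range t, ∑ _s ∈ Finset.range t, p :=
        Finset.sum_le_sum fun r hr =>
          (Finset.sum_le_sum fun s hs => hE s r (Nat.lt_succ_iff.mp (Finset.mem_range.mp hs))).trans
            (Finset.sum_le_sum_of_subset_of_nonneg
              (Finset.range_subset_range.mpr (Finset.mem_range.mp hr)) fun _ _ _ => hp)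
    _ = t ^ 2 * p := by simp [sq, mul_assoc]

/-- Equal to `⊤` when `[b, ∞)` is never reached, as an infimum over the empty set. -/
noncomputable def firstPassageTime {Ω : Type*} (X : ℕ → Ω → ℝ) (b : ℝ) (ω : Ω) : ℝ≥0∞ :=
  ⨅ t ∈ {t : ℕ | b ≤ X t ω}, (t : ℝ≥0∞)

theorem natCast_lt_firstPassageTime_iff {Ω : Type*} {X : ℕ → Ω → ℝ} {b : ℝ} {ω : Ω} {n : ℕ} :
    (n : ℝ≥0∞) < firstPassageTime X b ω ↔ ∀ t ≤ n, X t ω < b := by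
  refine ⟨fun h t htn => not_le.mp fun hbt => ?_, fun h => ?_⟩
  · exact (h.trans_le (iInf₂_le t hbt)).not_ge (by exact_mod_cast htn)
  · calc (n : ℝ≥0∞) < (n + 1 : ℕ) := by exact_mod_cast n.lt_succ_self
      _ ≤ firstPassageTime X b ω := le_iInf₂ fun t (hbt : b ≤ X t ω) => by
          exact_mod_cast Nat.succ_le_of_lt (not_le.mp fun htn => (h t htn).not_ge hbt)

theorem measurableSet_natCast_lt_firstPassageTime {Ω : Type*} {m0 : MeasurableSpace Ω}
    {ℱ : Filtration ℕ m0} {X : ℕ → Ω → ℝ} (hX : Adapted ℱ X) (b : ℝ) (n : ℕ) :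
    MeasurableSet[ℱ n] {ω | (n : ℝ≥0∞) < firstPassageTime X b ω} := by
  simp only [natCast_lt_firstPassageTime_iff, ofPred_forall]
  exact .iInter fun t => .iInter fun htn =>
    measurableSet_lt ((hX t).mono (ℱ.mono htn) le_rfl) measurable_const

theorem exists_excursion_of_firstPassageTime_le {Ω : Type*} {X : ℕ → Ω → ℝ} {a b : ℝ} {ω : Ω}
    {t : ℕ} (hb : 0 < b) (h0 : X 0 ω ≤ 0)
    (hjump : ∀ u : ℕ, X u ω < a → (u : ℝ≥0∞) < firstPassageTime X b ω → X (u + 1) ω ≤ 0)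
    (ht : firstPassageTime X b ω ≤ t) :
    ∃ r < t, ∃ s ≤ r, X s ω ≤ 0 ∧
      (∀ v ∈ Icc s r, a ≤ X v ω ∧ (v : ℝ≥0∞) < firstPassageTime X b ω) ∧ b ≤ X (r + 1) ω := by
  classical
  obtain ⟨m, hmt, hbm⟩ : ∃ m ≤ t, b ≤ X m ω := by
    have := mt natCast_lt_firstPassageTime_iff.mpr (not_lt.mpr ht)
    push Not at this
    exact this
  have hhit : ∃ m, b ≤ X m ω := ⟨m, hbm⟩
  obtain ⟨r, hr⟩ : ∃ r, Nat.find hhit = r + 1 :=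
    Nat.exists_eq_succ_of_ne_zero fun h0' => by
      have := Nat.find_spec hhit
      rw [h0'] at this
      linarith
  have hbr : b ≤ X (r + 1) ω := hr ▸ Nat.find_spec hhit
  have hrT : ∀ v ≤ r, (v : ℝ≥0∞) < firstPassageTime X b ω := fun v hv =>
    natCast_lt_firstPassageTime_iff.mpr fun w hw => not_le.mp (Nat.find_min hhit (by omega))
  have har : a ≤ X r ω := not_lt.mp fun h => by linarith [hjump r h (hrT r le_rfl)]
  have hstay_r : ∀ v ∈ Icc r r, a ≤ X v ω := fun v hv => by rwa [le_antisymm hv.2 hv.1]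
  have hstay : ∃ s, ∀ v ∈ Icc s r, a ≤ X v ω := ⟨r, hstay_r⟩
  have hsr : Nat.find hstay ≤ r := Nat.find_min' hstay hstay_r
  refine ⟨r, by have := Nat.find_min' hhit hbm; omega, Nat.find hstay, hsr, ?_,
    fun v hv => ⟨Nat.find_spec hstay v hv, hrT v hv.2⟩, hbr⟩
  -- the excursion starts just after the last visit below `a`, or at time `0`
  rcases hs : Nat.find hstay with _ | s
  · exact h0
  · have hbelow : ¬ ∀ v ∈ Icc s r, a ≤ X v ω := Nat.find_min hstay (by omega)
    have hsa : X s ω < a := by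
      push Not at hbelow
      obtain ⟨v, hv, hva⟩ := hbelow
      rcases hv.1.eq_or_lt with rfl | hsv
      · exact hva
      · exact absurd (Nat.find_spec hstay v ⟨by omega, hv.2⟩) (not_le.mpr hva)
    exact hjump s hsa (hrT s (by omega))

theorem stmt_14_general {Ω : Type*} {m0 : MeasurableSpace Ω} (μ : Measure Ω)
    [IsProbabilityMeasure μ] (ℱ : Filtration ℕ m0) (X : ℕ → Ω → ℝ)
    (hadapted : Adapted ℱ X) (hint : ∀ t, Integrable (X t) μ)
    (b : ℝ) (hb : 0 < b)
    (T : Ω → ℝ≥0∞) (hT : ∀ ω, T ω = ⨅ t ∈ {t : ℕ | b ≤ X t ω}, (t : ℝ≥0∞))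
    (hX0 : ∀ ω, X 0 ω ≤ 0)
    (a c ε : ℝ) (hc0 : 0 < c) (hε : ε < 0)
    (hdrift : ∀ t : ℕ,
      μ[fun ω => (X (t + 1) ω - X t ω) *
          indicator {ω | a ≤ X t ω ∧ (t : ℝ≥0∞) < T ω} (fun _ => (1 : ℝ)) ω | ℱ t]
        ≤ᵐ[μ] fun ω =>
          ε * indicator {ω | a ≤ X t ω ∧ (t : ℝ≥0∞) < T ω} (fun _ => (1 : ℝ)) ω)
    (hstep : ∀ t : ℕ, ∀ ω,
      |X t ω - X (t + 1) ω| * indicator {ω | a ≤ X t ω} (fun _ => (1 : ℝ)) ω <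
        c * indicator {ω | a ≤ X t ω ∧ (t : ℝ≥0∞) < T ω} (fun _ => (1 : ℝ)) ω +
          indicator {ω | X t ω < a ∨ T ω ≤ (t : ℝ≥0∞)} (fun _ => (1 : ℝ)) ω)
    (hjump : ∀ t : ℕ, ∀ ω,
      X (t + 1) ω * indicator {ω | X t ω < a ∧ (t : ℝ≥0∞) < T ω} (fun _ => (1 : ℝ)) ω ≤ 0) :
    ∀ t : ℕ, (μ {ω | T ω ≤ (t : ℝ≥0∞)}).toReal ≤
      (t : ℝ) ^ 2 * Real.exp (-(b * |ε|) / (2 * c ^ 2)) := by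
  intro t
  obtain rfl : T = firstPassageTime X b := funext hT
  set A : ℕ → Set Ω := fun u => {ω | a ≤ X u ω ∧ (u : ℝ≥0∞) < firstPassageTime X b ω}
  have hA : DriftRegion μ ℱ X A b c ε :=
    { adapted := hadapted
      integrable := hint
      measurableSet := fun u => (measurableSet_le measurable_const (hadapted u)).inter
        (measurableSet_natCast_lt_firstPassageTime hadapted b u)
      le_of_mem := fun u ω hω => (natCast_lt_firstPassageTime_iff.mp hω.2 u le_rfl).le
      abs_sub_le := fun u ω hω => by
        simpa [hω.1, hω.2, not_lt.mpr hω.1, not_le.mpr hω.2] using (hstep u ω).le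
      condExp_le := hdrift }
  have hcover : {ω | firstPassageTime X b ω ≤ t} ⊆ ⋃ r ∈ Finset.range t,
      ⋃ s ∈ Finset.range (r + 1), excursion X A s r ∩ {ω | b ≤ X (r + 1) ω} := fun ω hω => by
    obtain ⟨r, hrt, s, hsr, hs0, hsr_mem, hbr⟩ := exists_excursion_of_firstPassageTime_le hb
      (hX0 ω) (fun u hu huT => by
        have hmem : ω ∈ {ω | X u ω < a ∧ (u : ℝ≥0∞) < firstPassageTime X b ω} := ⟨hu, huT⟩
        simpa [indicator_of_mem hmem] using hjump u ω) hω
    simp only [mem_iUnion, Finset.mem_range]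
    exact ⟨r, hrt, s, Nat.lt_succ_of_le hsr, ⟨hs0, mem_iInter₂.mpr hsr_mem⟩, hbr⟩
  exact measureReal_le_sq_mul_of_subset_iUnion hcover fun s r hsr =>
    hA.measureReal_excursion_inter_le_exp hc0 hε hb.le hsr

/-- Negative drift theorem: under a negative drift condition, bounded step sizes, and a
no-jump-from-below condition, the probability of hitting `[b, ∞)` within `t` steps is at
most `t² · exp(−b|ε|/(2c²))`. -/
theorem stmt_14 {Ω : Type*} {m0 : MeasurableSpace Ω} (μ : Measure Ω)
    [IsProbabilityMeasure μ] (ℱ : Filtration ℕ m0) (X : ℕ → Ω → ℝ)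
    (hadapted : Adapted ℱ X) (hint : ∀ t, Integrable (X t) μ)
    (b : ℝ) (hb : 0 < b)
    (T : Ω → ℝ≥0∞) (hT : ∀ ω, T ω = ⨅ t ∈ {t : ℕ | b ≤ X t ω}, (t : ℝ≥0∞))
    (hX0 : ∀ ω, X 0 ω ≤ 0)
    (a c ε : ℝ) (ha : a ≤ 0) (hc0 : 0 < c) (hcb : c < b) (hε : ε < 0)
    (hdrift : ∀ t : ℕ,
      μ[fun ω => (X (t + 1) ω - X t ω) *
          indicator {ω | a ≤ X t ω ∧ (t : ℝ≥0∞) < T ω} (fun _ => (1 : ℝ)) ω | ℱ t]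
        ≤ᵐ[μ] fun ω =>
          ε * indicator {ω | a ≤ X t ω ∧ (t : ℝ≥0∞) < T ω} (fun _ => (1 : ℝ)) ω)
    (hstep : ∀ t : ℕ, ∀ ω,
      |X t ω - X (t + 1) ω| * indicator {ω | a ≤ X t ω} (fun _ => (1 : ℝ)) ω <
        c * indicator {ω | a ≤ X t ω ∧ (t : ℝ≥0∞) < T ω} (fun _ => (1 : ℝ)) ω +
          indicator {ω | X t ω < a ∨ T ω ≤ (t : ℝ≥0∞)} (fun _ => (1 : ℝ)) ω)
    (hjump : ∀ t : ℕ, ∀ ω,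
      X (t + 1) ω * indicator {ω | X t ω < a ∧ (t : ℝ≥0∞) < T ω} (fun _ => (1 : ℝ)) ω ≤ 0) :
    ∀ t : ℕ, (μ {ω | T ω ≤ (t : ℝ≥0∞)}).toReal ≤
      (t : ℝ) ^ 2 * Real.exp (-(b * |ε|) / (2 * c ^ 2)) :=
  stmt_14_general μ ℱ X hadapted hint b hb T hT hX0 a c ε hc0 hε hdrift hstep hjump
end

section
/- Let X = Σ_{i=1}^n X_i where the X_i are independent exponential random variables with rates a_i > 0. Let μ = Σ 1/a_i and a_* = min_i a_i. Then for every λ ∈ (0, 1), Pr[X ≤ λμ] ≤ exp(−a_*·μ·(λ − 1 − ln λ)). -/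
/-!
Chernoff's method for the lower tail. For `s ≥ 0`, Markov's inequality applied to `exp (-s X)`
and independence give `P(X ≤ λμ) ≤ exp (s λ μ) ∏ᵢ aᵢ / (aᵢ + s)`. Choosing
`s = a_* (1 - λ) / λ` (the optimal choice when all rates equal `a_*`), each factor is at most
`λ ^ (a_* / aᵢ)` by Bernoulli's inequality for the exponent `1 - a_* / aᵢ ∈ [0, 1]`, and the
product of these is `λ ^ (a_* μ)`.
-/

open MeasureTheory ProbabilityTheory Real

lemma mgf_id_expMeasure {r t : ℝ} (hr : 0 < r) (ht : t < r) :
    mgf id (expMeasure r) t = r / (r - t) := by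
  have hdensity : ∀ x : ℝ, (exponentialPDF r x).toReal • exp (t * id x) =
      (Set.Ici 0).indicator (fun x => r * exp ((t - r) * x)) x := by
    intro x
    rw [exponentialPDF_eq, ENNReal.toReal_ofReal (by split_ifs <;> positivity)]
    by_cases hx : 0 ≤ x
    · rw [if_pos hx, Set.indicator_of_mem (Set.mem_Ici.2 hx), smul_eq_mul, mul_assoc, ← exp_add]
      congr 2
      simp only [id_eq]
      ring
    · rw [if_neg hx, Set.indicator_of_notMem (by simpa using hx), zero_smul]
  calc mgf id (expMeasure r) t
      = ∫ x, (exponentialPDF r x).toReal • exp (t * id x) :=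
        integral_withDensity_eq_integral_toReal_smul
          (measurable_exponentialPDFReal r).ennreal_ofReal
          (ae_of_all _ fun _ => ENNReal.ofReal_lt_top) _
    _ = r * ∫ x in Set.Ioi 0, exp ((t - r) * x) := by
        simp_rw [hdensity]
        rw [integral_indicator measurableSet_Ici, integral_Ici_eq_integral_Ioi,
          integral_const_mul]
    _ = r / (r - t) := by
        rw [integral_exp_mul_Ioi (by linarith), mul_zero, exp_zero, ← neg_sub r t, div_neg,
          neg_div, neg_neg, mul_one_div]

lemma mgf_eq_of_map_eq_expMeasure {Ω : Type*} {m0 : MeasurableSpace Ω} {μ : Measure Ω}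
    {X : Ω → ℝ} (hX : AEMeasurable X μ) {r t : ℝ} (hd : μ.map X = expMeasure r) (hr : 0 < r)
    (ht : t < r) :
    mgf X μ t = r / (r - t) := by
  rw [← mgf_id_map hX, hd, mgf_id_expMeasure hr ht]

lemma measureReal_sum_le_le_exp_mul_prod {Ω ι : Type*} {m0 : MeasurableSpace Ω}
    {μ : Measure Ω} [Fintype ι] {a : ι → ℝ} (ha : ∀ i, 0 < a i) {X : ι → Ω → ℝ}
    (hmeas : ∀ i, Measurable (X i)) (hindep : iIndepFun X μ)
    (hdist : ∀ i, μ.map (X i) = expMeasure (a i)) {s : ℝ} (hs : 0 ≤ s) (x : ℝ) :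
    μ.real {ω | ∑ i, X i ω ≤ x} ≤ exp (s * x) * ∏ i, a i / (a i + s) := by
  have := hindep.isProbabilityMeasure
  have hmgf : ∀ i, mgf (X i) μ (-s) = a i / (a i + s) := fun i => by
    rw [mgf_eq_of_map_eq_expMeasure (hmeas i).aemeasurable (hdist i) (ha i)
      (by linarith [ha i]), sub_neg_eq_add]
  have hint : ∀ i, Integrable (fun ω => exp (-s * X i ω)) μ := fun i =>
    mgf_pos_iff.mp (by rw [hmgf]; exact div_pos (ha i) (by linarith [ha i]))
  have hchernoff := measure_le_le_exp_mul_mgf (X := ∑ i, X i) x (neg_nonpos.2 hs)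
    (hindep.integrable_exp_mul_sum hmeas fun i _ => hint i)
  simpa only [hindep.mgf_sum hmeas, hmgf, neg_neg, Finset.sum_apply] using hchernoff

lemma div_add_mul_one_sub_div_le_rpow {a b lam : ℝ} (ha : 0 < a) (hb : 0 ≤ b) (hba : b ≤ a)
    (hlam : 0 < lam) :
    a / (a + b * (1 - lam) / lam) ≤ lam ^ (b / a) := by
  set c := b / a with hc
  have hc0 : 0 ≤ c := div_nonneg hb ha.le
  have hc1 : c ≤ 1 := (div_le_one ha).2 hba
  have hbernoulli : lam ^ (1 - c) ≤ (1 - c) * lam + c := by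
    have := rpow_one_add_le_one_add_mul_self (s := lam - 1) (by linarith) (sub_nonneg.2 hc1)
      (by linarith)
    rw [add_sub_cancel] at this
    linarith
  have hpos : 0 < (1 - c) * lam + c := (rpow_pos_of_pos hlam _).trans_le hbernoulli
  have hfactor : a / (a + b * (1 - lam) / lam) = lam / ((1 - c) * lam + c) := by
    rw [hc]
    field_simp
    ring
  rw [hfactor, div_le_iff₀ hpos]
  calc lam = lam ^ c * lam ^ (1 - c) := by rw [← rpow_add hlam, add_sub_cancel, rpow_one]
    _ ≤ lam ^ c * ((1 - c) * lam + c) := by gcongr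

theorem stmt_15_general {Ω : Type*} {m0 : MeasurableSpace Ω} (μ : Measure Ω)
    (n : ℕ) (a : Fin n → ℝ)
    (ha : ∀ i, 0 < a i) (X : Fin n → Ω → ℝ)
    (hmeas : ∀ i, Measurable (X i))
    (hindep : iIndepFun X μ)
    (hdist : ∀ i, μ.map (X i) = expMeasure (a i))
    (lam : ℝ) (hlam0 : 0 < lam) (hlam1 : lam < 1) :
    (μ {ω | ∑ i, X i ω ≤ lam * ∑ i, 1 / a i}).toReal ≤
      Real.exp (-(⨅ i, a i) * (∑ i, 1 / a i) * (lam - 1 - Real.log lam)) := by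
  set b := ⨅ i, a i
  set M := ∑ i, 1 / a i
  have hb : 0 ≤ b := iInf_nonneg fun i => (ha i).le
  have hba : ∀ i, b ≤ a i := ciInf_le (Set.finite_range a).bddBelow
  set s := b * (1 - lam) / lam
  have hs : 0 ≤ s := div_nonneg (mul_nonneg hb (by linarith)) hlam0.le
  calc (μ {ω | ∑ i, X i ω ≤ lam * M}).toReal
      ≤ exp (s * (lam * M)) * ∏ i, a i / (a i + s) :=
        measureReal_sum_le_le_exp_mul_prod ha hmeas hindep hdist hs _
    _ ≤ exp (s * (lam * M)) * ∏ i, lam ^ (b / a i) := by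
        gcongr with i
        · exact fun i _ => div_nonneg (ha i).le (by linarith [ha i])
        · exact div_add_mul_one_sub_div_le_rpow (ha i) hb (hba i) hlam0
    _ = exp (-b * M * (lam - 1 - log lam)) := by
        have hsum : ∑ i, b / a i = b * M := by simp only [M, Finset.mul_sum, mul_one_div]
        rw [← rpow_sum_of_pos hlam0, hsum, rpow_def_of_pos hlam0, ← exp_add]
        congr 1
        simp only [s]
        field_simp
        ring

/-- Tail bound for a sum of independent exponential random variables
(Janson, Theorem 5.1). -/
theorem stmt_15 {Ω : Type*} {m0 : MeasurableSpace Ω} (μ : Measure Ω)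
    [IsProbabilityMeasure μ] (n : ℕ) (hn : 0 < n) (a : Fin n → ℝ)
    (ha : ∀ i, 0 < a i) (X : Fin n → Ω → ℝ)
    (hmeas : ∀ i, Measurable (X i))
    (hindep : iIndepFun X μ)
    (hdist : ∀ i, μ.map (X i) = expMeasure (a i))
    (lam : ℝ) (hlam0 : 0 < lam) (hlam1 : lam < 1) :
    (μ {ω | ∑ i, X i ω ≤ lam * ∑ i, 1 / a i}).toReal ≤
      Real.exp (-(⨅ i, a i) * (∑ i, 1 / a i) * (lam - 1 - Real.log lam)) :=
  stmt_15_general (m0 := m0) μ n a ha X hmeas hindep hdist lam hlam0 hlam1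
end

section
/- Let λ₁*, λ₂*, ϱ₁, ϱ₂, n, c > 0 with ϱ₂/λ₂* + ϱ₁/λ₁* < (1−c)·n, let I₁* = (n − ϱ₂/λ₂* − ϱ₁/λ₁*)·ϱ₂/(ϱ₁+ϱ₂), and set x₁ = (ϱ₁+ϱ₂)/(ϱ₂λ₁*n). Then for every constant ε_l > 0 and every I₁ ∈ (0, ε_l·n], writing c₁ = λ₁*·n, one has x₁·f(I₁*, I₁) ≥ (c/c₁)·n·( ln(1/ε_l) − ln((ϱ₁+ϱ₂)/(ϱ₂·c)) − 1 ), where f(x*,x) = x*(x/x* − ln(x/x*) − 1). -/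
theorem stmt_17 (lam1 lam2 rho1 rho2 n c : ℝ)
    (hlam1 : 0 < lam1) (hlam2 : 0 < lam2) (hrho1 : 0 < rho1) (hrho2 : 0 < rho2)
    (hn : 0 < n) (hc : 0 < c)
    (hthr : rho2 / lam2 + rho1 / lam1 < (1 - c) * n)
    (I1s : ℝ)
    (hI1s : I1s = (n - rho2 / lam2 - rho1 / lam1) * (rho2 / (rho1 + rho2)))
    (x1 : ℝ) (hx1 : x1 = (rho1 + rho2) / (rho2 * lam1 * n))
    (el : ℝ) (hel : 0 < el)
    (I1 : ℝ) (hI1pos : 0 < I1) (hI1le : I1 ≤ el * n) :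
    (c / (lam1 * n)) * n *
        (Real.log (1 / el) - Real.log ((rho1 + rho2) / (rho2 * c)) - 1) ≤
      x1 * f I1s I1 := by
  have hsum : 0 < rho1 + rho2 := by linarith
  have hB : c * n < n - rho2 / lam2 - rho1 / lam1 := by nlinarith
  have hr : 0 < rho2 / (rho1 + rho2) := div_pos hrho2 hsum
  have hI1s_lb : c * n * (rho2 / (rho1 + rho2)) < I1s := by
    rw [hI1s]; exact mul_lt_mul_of_pos_right hB hr
  have hI1s_pos : 0 < I1s := lt_trans (by positivity) hI1s_lb
  set t := I1 / I1s with htdef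
  have ht : 0 < t := div_pos hI1pos hI1s_pos
  have hlogt : Real.log t ≤ t - 1 := Real.log_le_sub_one_of_pos ht
  have hnonneg : 0 ≤ t - Real.log t - 1 := by linarith
  have hfe : x1 * f I1s I1 = (x1 * I1s) * (t - Real.log t - 1) := by
    simp only [f, htdef]; ring
  have hx1I : x1 * I1s = (n - rho2 / lam2 - rho1 / lam1) / (lam1 * n) := by
    rw [hx1, hI1s]; field_simp
  have hcoef : c / (lam1 * n) * n = c / lam1 := by field_simp
  have hcdiv : c / lam1 ≤ x1 * I1s := by
    rw [hx1I, div_le_div_iff₀ hlam1 (by positivity)]; nlinarith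
  -- upper bound on t
  set X := el * ((rho1 + rho2) / (rho2 * c)) with hXdef
  have hX : 0 < X := by positivity
  have ht_ub : t ≤ X := by
    rw [div_le_iff₀ hI1s_pos]
    have heq : X * (c * n * (rho2 / (rho1 + rho2))) = el * n := by
      rw [hXdef]; field_simp
    nlinarith
  have hlogX : Real.log t ≤ Real.log el + Real.log ((rho1 + rho2) / (rho2 * c)) := by
    have := Real.log_le_log ht ht_ub
    rwa [hXdef, Real.log_mul (ne_of_gt hel) (by positivity)] at this
  have hlog1el : Real.log (1 / el) = -Real.log el := by
    rw [one_div, Real.log_inv]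
  have hkey : Real.log (1 / el) - Real.log ((rho1 + rho2) / (rho2 * c)) - 1
      ≤ t - Real.log t - 1 := by
    rw [hlog1el]; linarith
  calc c / (lam1 * n) * n *
        (Real.log (1 / el) - Real.log ((rho1 + rho2) / (rho2 * c)) - 1)
      = c / lam1 * (Real.log (1 / el) - Real.log ((rho1 + rho2) / (rho2 * c)) - 1) := by
        rw [hcoef]
    _ ≤ c / lam1 * (t - Real.log t - 1) :=
        mul_le_mul_of_nonneg_left hkey (by positivity)
    _ ≤ (x1 * I1s) * (t - Real.log t - 1) :=
        mul_le_mul_of_nonneg_right hcdiv hnonneg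
    _ = x1 * f I1s I1 := hfe.symm
end
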